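/- Let (Ω, 𝔉, P) be a probability space, 𝒢 ⊆ 𝔉 a sub-σ-algebra, and β ∈ (0,1). Let f : ℝⁿ → ℝ be differentiable with L-Lipschitz continuous gradient (L > 0). Let X : Ω → ℝⁿ and Δ : Ω → [0,∞) be 𝒢-measurable random variables, let S : Ω → ℝⁿ be a random vector with ‖S‖ ≤ Δ almost surely and with f(X+S) − f(X) integrable, and let J be an event with E[1(Jᶜ) | 𝒢] ≤ 1 − β almost surely. Then for every event T ⊆ Jᶜ, almost surely E[(f(X+S) − f(X))·1(T) | 𝒢] ≤ (1 − β)·((L/2)·Δ² + ‖∇f(X)‖·Δ). -/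

import Mathlib

open MeasureTheory

lemma descent {n : ℕ} (L : ℝ) (hL : 0 ≤ L) (f : EuclideanSpace ℝ (Fin n) → ℝ)
    (hf : Differentiable ℝ f)
    (hflip : ∀ a b : EuclideanSpace ℝ (Fin n),
      ‖gradient f b - gradient f a‖ ≤ L * ‖b - a‖)
    (x s : EuclideanSpace ℝ (Fin n)) :
    f (x + s) - f x ≤ ‖gradient f x‖ * ‖s‖ + L / 2 * ‖s‖ ^ 2 := by
  have hgradc : Continuous fun y => gradient f y :=
    (LipschitzWith.of_dist_le_mul (K := ⟨L, hL⟩) (fun a b => by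
      rw [dist_eq_norm, dist_eq_norm]; exact hflip b a)).continuous
  have hφ : ∀ t : ℝ, HasDerivAt (fun t : ℝ => f (x + t • s))
      (inner ℝ (gradient f (x + t • s)) s : ℝ) t := by
    intro t
    have h1 : HasDerivAt (fun t : ℝ => x + t • s) s t := by
      simpa using ((hasDerivAt_id t).smul_const s).const_add x
    have h2 := (hf (x + t • s)).hasGradientAt.hasFDerivAt
    simpa [Function.comp_def] using h2.comp_hasDerivAt t h1
  have hcont : Continuous fun t : ℝ => (inner ℝ (gradient f (x + t • s)) s : ℝ) := by
    exact (hgradc.comp (by continuity)).inner continuous_const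
  have key : f (x + s) - f x = ∫ t in (0:ℝ)..1, (inner ℝ (gradient f (x + t • s)) s : ℝ) := by
    rw [intervalIntegral.integral_eq_sub_of_hasDerivAt (fun t _ => hφ t)
      (hcont.intervalIntegrable 0 1)]
    simp
  rw [key]
  have hmono : ∀ t ∈ Set.Icc (0:ℝ) 1,
      (inner ℝ (gradient f (x + t • s)) s : ℝ) ≤ ‖gradient f x‖ * ‖s‖ + (L * ‖s‖ ^ 2) * t := by
    intro t ht
    have h1 : (inner ℝ (gradient f (x + t • s)) s : ℝ)
        = inner ℝ (gradient f x) s + inner ℝ (gradient f (x + t • s) - gradient f x) s := by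
      rw [inner_sub_left]; ring
    rw [h1]
    have h2 : (inner ℝ (gradient f x) s : ℝ) ≤ ‖gradient f x‖ * ‖s‖ := real_inner_le_norm _ _
    have h3 : (inner ℝ (gradient f (x + t • s) - gradient f x) s : ℝ)
        ≤ ‖gradient f (x + t • s) - gradient f x‖ * ‖s‖ := real_inner_le_norm _ _
    have h4 : ‖gradient f (x + t • s) - gradient f x‖ ≤ L * (t * ‖s‖) := by
      have := hflip x (x + t • s)
      simpa [norm_smul, abs_of_nonneg ht.1] using this
    have h5 : ‖gradient f (x + t • s) - gradient f x‖ * ‖s‖ ≤ L * (t * ‖s‖) * ‖s‖ :=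
      mul_le_mul_of_nonneg_right h4 (norm_nonneg s)
    nlinarith [norm_nonneg s]
  have hInt2 : IntervalIntegrable (fun t : ℝ => ‖gradient f x‖ * ‖s‖ + (L * ‖s‖ ^ 2) * t)
      volume 0 1 := (by continuity : Continuous _).intervalIntegrable 0 1
  calc ∫ t in (0:ℝ)..1, (inner ℝ (gradient f (x + t • s)) s : ℝ)
      ≤ ∫ t in (0:ℝ)..1, (‖gradient f x‖ * ‖s‖ + (L * ‖s‖ ^ 2) * t) :=
        intervalIntegral.integral_mono_on zero_le_one (hcont.intervalIntegrable 0 1) hInt2 hmono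
    _ = ‖gradient f x‖ * ‖s‖ + L / 2 * ‖s‖ ^ 2 := by
        rw [intervalIntegral.integral_add (g := fun t : ℝ => L * ‖s‖ ^ 2 * t) (intervalIntegrable_const (c := ‖gradient f x‖ * ‖s‖))
          (((continuous_const.mul continuous_id').intervalIntegrable 0 1) :
            IntervalIntegrable (fun t : ℝ => L * ‖s‖ ^ 2 * t) volume 0 1)]
        rw [intervalIntegral.integral_const, intervalIntegral.integral_const_mul, integral_id]
        simp
        ring

theorem stmt_1 {Ω : Type*} {n : ℕ} (𝒢 : MeasurableSpace Ω) {𝔉 : MeasurableSpace Ω} (P : Measure Ω)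
    [IsProbabilityMeasure P]
    (h𝒢 : 𝒢 ≤ 𝔉) (β : ℝ) (hβ : β ∈ Set.Ioo (0 : ℝ) 1)
    (L : ℝ) (hL : 0 < L)
    (f : EuclideanSpace ℝ (Fin n) → ℝ) (hf : Differentiable ℝ f)
    (hflip : ∀ a b : EuclideanSpace ℝ (Fin n),
      ‖gradient f b - gradient f a‖ ≤ L * ‖b - a‖)
    (X : Ω → EuclideanSpace ℝ (Fin n)) (Δ : Ω → ℝ)
    (hX : Measurable[𝒢] X) (hΔ : Measurable[𝒢] Δ) (hΔ0 : ∀ ω, 0 ≤ Δ ω)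
    (S : Ω → EuclideanSpace ℝ (Fin n))
    (hS : ∀ᵐ ω ∂P, ‖S ω‖ ≤ Δ ω)
    (hint : Integrable (fun ω => f (X ω + S ω) - f (X ω)) P)
    (J : Set Ω) (hJm : MeasurableSet J)
    (hJ : ∀ᵐ ω ∂P, (P[Set.indicator Jᶜ (fun _ => (1 : ℝ))|𝒢]) ω ≤ 1 - β)
    (T : Set Ω) (hTm : MeasurableSet T) (hTJ : T ⊆ Jᶜ) :
    ∀ᵐ ω ∂P,
      (P[Set.indicator T (fun ω => f (X ω + S ω) - f (X ω))|𝒢]) ω ≤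
        (1 - β) * ((L / 2) * Δ ω ^ 2 + ‖gradient f (X ω)‖ * Δ ω) := by
  letI : MeasurableSpace Ω := 𝔉
  have hgradc : Continuous fun y => gradient f y :=
    (LipschitzWith.of_dist_le_mul (K := ⟨L, hL.le⟩) (fun a b => by
      rw [dist_eq_norm, dist_eq_norm]; exact hflip b a)).continuous
  set F : Ω → ℝ := fun ω => f (X ω + S ω) - f (X ω) with hF
  set g : Ω → ℝ := fun ω => (L / 2) * Δ ω ^ 2 + ‖gradient f (X ω)‖ * Δ ω with hgdef
  set H : Ω → ℝ := T.indicator F with hH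
  -- pointwise bound
  have hFg : ∀ᵐ ω ∂P, F ω ≤ g ω := by
    filter_upwards [hS] with ω hω
    have := descent L hL.le f hf hflip (X ω) (S ω)
    have h1 : ‖gradient f (X ω)‖ * ‖S ω‖ ≤ ‖gradient f (X ω)‖ * Δ ω :=
      mul_le_mul_of_nonneg_left hω (norm_nonneg _)
    have h2 : L / 2 * ‖S ω‖ ^ 2 ≤ L / 2 * Δ ω ^ 2 := by
      have := pow_le_pow_left₀ (norm_nonneg (S ω)) hω 2
      nlinarith
    simp only [hF, hgdef]
    linarith
  have hg0 : ∀ ω, 0 ≤ g ω := fun ω => by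
    have := hΔ0 ω
    have : (0:ℝ) ≤ (L / 2) * Δ ω ^ 2 := by positivity
    have h2 : (0:ℝ) ≤ ‖gradient f (X ω)‖ * Δ ω := mul_nonneg (norm_nonneg _) (hΔ0 ω)
    simp only [hgdef]; linarith
  have hg𝒢 : Measurable[𝒢] g := by
    have h1 : Measurable[𝒢] fun ω => ‖gradient f (X ω)‖ :=
      ((continuous_norm.comp hgradc).measurable).comp hX
    exact ((measurable_const.mul (hΔ.pow_const 2)).add (h1.mul hΔ))
  have hH_int := hint.indicator hTm
  set χ : Ω → ℝ := Set.indicator Jᶜ (fun _ => (1:ℝ)) with hχ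
  have hχ_int := (integrable_const (μ := P) (1:ℝ)).indicator hJm.compl
  have hχ0 : ∀ ω, 0 ≤ χ ω := fun ω => Set.indicator_nonneg (fun _ _ => zero_le_one) ω
  have hχ1 : ∀ ω, χ ω ≤ 1 := fun ω => by
    by_cases h : ω ∈ Jᶜ <;> simp [hχ, Set.indicator_of_mem, Set.indicator_of_notMem, h]
  have key : ∀ k : ℕ, ∀ᵐ ω ∂P, g ω ≤ (k:ℝ) → (P[H|𝒢]) ω ≤ (1 - β) * g ω := by
    intro k
    set A : Set Ω := {ω | g ω ≤ (k:ℝ)} with hA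
    have hA𝒢 : MeasurableSet[𝒢] A := measurableSet_le hg𝒢 measurable_const
    set G : Ω → ℝ := A.indicator g with hG
    have hG𝒢 : StronglyMeasurable[𝒢] G := (hg𝒢.stronglyMeasurable).indicator hA𝒢
    have hG0 : ∀ ω, 0 ≤ G ω := fun ω => Set.indicator_nonneg (fun ω _ => hg0 ω) ω
    have hGk : ∀ ω, G ω ≤ (k:ℝ) := by
      intro ω; by_cases h : ω ∈ A
      · rw [hG, Set.indicator_of_mem h]; exact h
      · rw [hG, Set.indicator_of_notMem h]; exact Nat.cast_nonneg k
    have hGχ_int : Integrable (G * χ) P := by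
      apply Integrable.mono' (integrable_const (k:ℝ))
      · exact ((hG𝒢.mono h𝒢).aestronglyMeasurable.mul
          (((measurable_const : Measurable[𝔉] fun _ : Ω => (1:ℝ)).indicator
            hJm.compl).aestronglyMeasurable))
      · filter_upwards with ω
        rw [Pi.mul_apply, Real.norm_eq_abs, abs_of_nonneg (mul_nonneg (hG0 ω) (hχ0 ω))]
        calc G ω * χ ω ≤ (k:ℝ) * 1 :=
              mul_le_mul (hGk ω) (hχ1 ω) (hχ0 ω) (Nat.cast_nonneg k)
          _ = (k:ℝ) := mul_one _
    have hmono : (A.indicator H) ≤ᵐ[P] G * χ := by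
      filter_upwards [hFg] with ω hω
      by_cases hA' : ω ∈ A
      · rw [Set.indicator_of_mem hA']
        by_cases hT' : ω ∈ T
        · have hJ' : ω ∈ Jᶜ := hTJ hT'
          rw [hH, Set.indicator_of_mem hT']
          have : (G * χ) ω = g ω := by
            simp [hG, hχ, Set.indicator_of_mem hA', Set.indicator_of_mem hJ']
          rw [this]; exact hω
        · rw [hH, Set.indicator_of_notMem hT']
          exact mul_nonneg (hG0 ω) (hχ0 ω)
      · rw [Set.indicator_of_notMem hA']
        exact mul_nonneg (hG0 ω) (hχ0 ω)
    have hAH_int := hH_int.indicator (h𝒢 _ hA𝒢)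
    have step1 := condExp_indicator (μ := P) (m := 𝒢) hH_int hA𝒢
    have step2 := condExp_mono (m := 𝒢) hAH_int hGχ_int hmono
    have step3 := condExp_mul_of_stronglyMeasurable_left (μ := P) (m := 𝒢) hG𝒢 hGχ_int hχ_int
    filter_upwards [step1, step2, step3, hJ] with ω h1 h2 h3 h4 hgk
    have hA' : ω ∈ A := hgk
    calc (P[H|𝒢]) ω = (A.indicator (P[H|𝒢])) ω := by rw [Set.indicator_of_mem hA']
      _ = (P[A.indicator H|𝒢]) ω := h1.symm
      _ ≤ (P[G * χ|𝒢]) ω := h2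
      _ = G ω * (P[χ|𝒢]) ω := h3
      _ ≤ G ω * (1 - β) := mul_le_mul_of_nonneg_left h4 (hG0 ω)
      _ = (1 - β) * g ω := by rw [hG, Set.indicator_of_mem hA']; ring
  filter_upwards [ae_all_iff.mpr key] with ω hω
  exact hω ⌈g ω⌉₊ (Nat.le_ceil _)
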